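/- Let n ≥ 3 and let Δ := {ε_i − ε_j : 1 ≤ i ≠ j ≤ n} ⊂ ℝ^n be the root system of psq(n). For 1 ≤ n₀ ≤ n − 1 set P(n₀) := {ε_i − ε_j : i ≠ j and (i, j ≤ n₀ or i, j > n₀)} ∪ {ε_i − ε_j : i ≤ n₀ < j}. Then a subset P ⊆ Δ is a cominuscule parabolic set of roots of Δ if and only if there exist σ ∈ S_n and n₀ with 1 ≤ n₀ ≤ n − 1 such that σ(P) = P(n₀); each P(n₀) is itself a cominuscule parabolic set of roots, and for each cominuscule parabolic P the integer n₀ with this property is unique (so there are exactly n − 1 orbits). -/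

import Mathlib

/-!
Write `R i j` for `ε i - ε j ∈ P`. For a parabolic `P`, the relation `R` is total and transitive
on distinct indices, and `P` is cominuscule exactly when the strict part of `R` has no chain
`i > j > k`. Such a relation has only two levels: if `A` is the set of indices lying above all
others, then `R i j ↔ (j ∈ A → i ∈ A)`. So the cominuscule parabolic sets are the sets
`blockParabolic A` with `∅ ≠ A ≠ univ`; a permutation moves `A` to `{i | i < #A}`, turning
`blockParabolic A` into `P(#A)`, and since `A` can be read off from `blockParabolic A`, the
number `#A` is the only invariant.
-/

open Pointwise

/-- A proper subset `P` of a symmetric root set `Δ` is a parabolic set of roots if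
`Δ = P ∪ (-P)` and `P` is closed under sums lying in `Δ`. -/
def IsParabolic {V : Type*} [AddCommGroup V] (Δ P : Set V) : Prop :=
  P ⊂ Δ ∧ Δ = P ∪ (-P) ∧ ∀ α ∈ P, ∀ β ∈ P, α + β ∈ Δ → α + β ∈ P

/-- A parabolic set of roots is cominuscule if the sum of any two elements of its
nilradical `N⁺ = P \ (-P)` is not a root. -/
def IsCominuscule {V : Type*} [AddCommGroup V] (Δ P : Set V) : Prop :=
  IsParabolic Δ P ∧ ∀ α ∈ P \ (-P), ∀ β ∈ P \ (-P), α + β ∉ Δ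

namespace PSQ

variable {n : ℕ}

noncomputable def ε (i : Fin n) : Fin n → ℝ := Pi.single i 1

/-- The root system of `psq(n)`. -/
noncomputable def Δroot (n : ℕ) : Set (Fin n → ℝ) :=
  {v | ∃ i j : Fin n, i ≠ j ∧ v = ε i - ε j}

/-- The parabolic set `P(n₀)` (with `1 ≤ n₀ ≤ n-1` in 1-based indexing; here the
condition `i ≤ n₀` becomes `(i : ℕ) < n₀` in 0-based indexing). -/
noncomputable def P (n n₀ : ℕ) : Set (Fin n → ℝ) :=
  {v | ∃ i j : Fin n, i ≠ j ∧
      (((i : ℕ) < n₀ ∧ (j : ℕ) < n₀) ∨ (n₀ ≤ (i : ℕ) ∧ n₀ ≤ (j : ℕ))) ∧ v = ε i - ε j} ∪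
  {v | ∃ i j : Fin n, (i : ℕ) < n₀ ∧ n₀ ≤ (j : ℕ) ∧ v = ε i - ε j}

/-- The action of `σ ∈ Sₙ` on `ℝⁿ` permuting the `εᵢ`. -/
def act (σ : Equiv.Perm (Fin n)) : (Fin n → ℝ) → (Fin n → ℝ) :=
  fun v => v ∘ σ.symm

end PSQ

theorem exists_finset_rel_iff_mem_imp_mem {α : Type*} [Fintype α] (R : α → α → Prop)
    (total : ∀ i j, i ≠ j → R i j ∨ R j i)
    (trans : ∀ i j k, i ≠ k → R i j → R j k → R i k)
    (no_chain : ∀ i j k, R i j → ¬R j i → R j k → ¬R k j → False)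
    (not_total : ∃ i j, i ≠ j ∧ ¬R i j) :
    ∃ A : Finset α, 0 < A.card ∧ A.card < Fintype.card α ∧
      ∀ i j, i ≠ j → (R i j ↔ (j ∈ A → i ∈ A)) := by
  classical
  obtain ⟨i₀, j₀, hij₀, hR₀⟩ := not_total
  have hR₀' : R j₀ i₀ := (total i₀ j₀ hij₀).resolve_left hR₀
  refine ⟨({i | ∀ j ≠ i, R i j} : Finset α), Finset.card_pos.2 ⟨j₀, ?_⟩,
    Finset.card_lt_univ_of_notMem (x := i₀) ?_, fun i j hij => ?_⟩
  · simp only [Finset.mem_filter_univ]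
    intro l hl
    by_contra hR
    exact no_chain l j₀ i₀ ((total j₀ l hl.symm).resolve_left hR) hR hR₀' hR₀
  · simpa using ⟨j₀, hij₀.symm, hR₀⟩
  · simp only [Finset.mem_filter_univ]
    refine ⟨fun hRij hj l hl => ?_, fun h => ?_⟩
    · obtain rfl | hjl := eq_or_ne j l
      · exact hRij
      · exact trans i j l hl.symm hRij (hj l hjl.symm)
    · by_contra hR
      have hR' : R j i := (total i j hij).resolve_left hR
      by_cases hj : ∀ l ≠ j, R j l
      · exact hR (h hj (j := j) hij.symm)
      · push Not at hj
        obtain ⟨k, hkj, hRjk⟩ := hj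
        exact no_chain k j i ((total j k hkj.symm).resolve_left hRjk) hRjk hR' hR

namespace PSQ

variable {n : ℕ}

lemma ε_sub_ε_eq_ε_sub_ε_iff {i j k l : Fin n} (hij : i ≠ j) :
    ε i - ε j = ε k - ε l ↔ i = k ∧ j = l := by
  rw [sub_eq_sub_iff_add_eq_add, ε, ε, ε, ε,
    Pi.single_add_single_eq_single_add_single one_ne_zero one_ne_zero]
  constructor
  · rintro (⟨rfl, rfl⟩ | ⟨-, h, -⟩ | ⟨h, -⟩)
    · exact ⟨rfl, rfl⟩
    · exact absurd h hij
    · norm_num at h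
  · rintro ⟨rfl, rfl⟩
    exact Or.inl ⟨rfl, rfl⟩

lemma sub_mem_Δroot_iff {i j : Fin n} : ε i - ε j ∈ Δroot n ↔ i ≠ j := by
  refine ⟨?_, fun h => ⟨i, j, h, rfl⟩⟩
  rintro ⟨k, l, hkl, h⟩ rfl
  simpa [ε, hkl] using congrFun h k

lemma neg_mem_Δroot {v : Fin n → ℝ} (hv : v ∈ Δroot n) : -v ∈ Δroot n := by
  obtain ⟨i, j, hij, rfl⟩ := hv
  exact ⟨j, i, hij.symm, neg_sub _ _⟩

/-- A root has a single positive coordinate, while unless `j = k` or `i = l` the sum below is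
at least `1` at both `i` and `k`. -/
lemma eq_or_eq_of_sub_add_sub_mem_Δroot {i j k l : Fin n} (hij : i ≠ j) (hkl : k ≠ l)
    (h : ε i - ε j + (ε k - ε l) ∈ Δroot n) : j = k ∨ i = l := by
  by_contra! hne
  obtain ⟨a, b, -, h⟩ := h
  have hi := congrFun h i
  have hk := congrFun h k
  simp only [ε, Pi.add_apply, Pi.sub_apply, Pi.single_apply] at hi hk
  grind

def blockParabolic (A : Finset (Fin n)) : Set (Fin n → ℝ) :=
  {v | ∃ i j, i ≠ j ∧ (j ∈ A → i ∈ A) ∧ v = ε i - ε j}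

variable {A : Finset (Fin n)}

lemma sub_mem_blockParabolic_iff {i j : Fin n} (hij : i ≠ j) :
    ε i - ε j ∈ blockParabolic A ↔ (j ∈ A → i ∈ A) := by
  refine ⟨?_, fun h => ⟨i, j, hij, h, rfl⟩⟩
  rintro ⟨k, l, -, h, hkl⟩
  obtain ⟨rfl, rfl⟩ := (ε_sub_ε_eq_ε_sub_ε_iff hij).1 hkl
  exact h

lemma blockParabolic_subset_Δroot : blockParabolic A ⊆ Δroot n := by
  rintro _ ⟨i, j, hij, -, rfl⟩
  exact ⟨i, j, hij, rfl⟩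

theorem isCominuscule_blockParabolic (h₀ : 0 < A.card) (h₁ : A.card < n) :
    IsCominuscule (Δroot n) (blockParabolic A) := by
  obtain ⟨a, ha⟩ := Finset.card_pos.1 h₀
  obtain ⟨b, -, hb⟩ := Finset.exists_mem_notMem_of_card_lt_card
    (h₁.trans_eq (Finset.card_fin n).symm)
  have hba : b ≠ a := by rintro rfl; exact hb ha
  have neg_mem_iff {i j : Fin n} (hij : i ≠ j) :
      ε i - ε j ∈ -blockParabolic A ↔ (i ∈ A → j ∈ A) := by
    rw [Set.mem_neg, neg_sub, sub_mem_blockParabolic_iff hij.symm]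
  refine ⟨⟨blockParabolic_subset_Δroot.ssubset_of_not_subset fun h => ?_, ?_, ?_⟩, ?_⟩
  · exact hb ((sub_mem_blockParabolic_iff hba).1 (h (sub_mem_Δroot_iff.2 hba)) ha)
  · ext v
    refine ⟨fun ⟨i, j, hij, hv⟩ => ?_, ?_⟩
    · subst hv
      by_cases h : j ∈ A → i ∈ A
      · exact Or.inl ((sub_mem_blockParabolic_iff hij).2 h)
      · exact Or.inr ((neg_mem_iff hij).2 fun hi => by tauto)
    · rintro (hv | hv)
      · exact blockParabolic_subset_Δroot hv
      · simpa using neg_mem_Δroot (blockParabolic_subset_Δroot hv)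
  · rintro _ ⟨i, j, hij, hA₁, rfl⟩ _ ⟨k, l, hkl, hA₂, rfl⟩ hsum
    rcases eq_or_eq_of_sub_add_sub_mem_Δroot hij hkl hsum with rfl | rfl
    · rw [sub_add_sub_cancel] at hsum ⊢
      exact ⟨i, l, sub_mem_Δroot_iff.1 hsum, fun h => hA₁ (hA₂ h), rfl⟩
    · rw [add_comm, sub_add_sub_cancel] at hsum ⊢
      exact ⟨k, j, sub_mem_Δroot_iff.1 hsum, fun h => hA₂ (hA₁ h), rfl⟩
  · rintro _ ⟨⟨i, j, hij, -, rfl⟩, hij'⟩ _ ⟨⟨k, l, hkl, -, rfl⟩, hkl'⟩ hsum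
    rw [neg_mem_iff hij] at hij'
    rw [neg_mem_iff hkl] at hkl'
    rcases eq_or_eq_of_sub_add_sub_mem_Δroot hij hkl hsum with rfl | rfl <;> tauto

theorem exists_eq_blockParabolic {Q : Set (Fin n → ℝ)} (hQ : IsCominuscule (Δroot n) Q) :
    ∃ A : Finset (Fin n), 0 < A.card ∧ A.card < n ∧ Q = blockParabolic A := by
  obtain ⟨⟨hsub, hcover, hclosed⟩, hnil⟩ := hQ
  have neg_mem_iff (i j : Fin n) : ε i - ε j ∈ -Q ↔ ε j - ε i ∈ Q := by
    rw [Set.mem_neg, neg_sub]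
  have total (i j : Fin n) (hij : i ≠ j) : ε i - ε j ∈ Q ∨ ε j - ε i ∈ Q := by
    have h := sub_mem_Δroot_iff.2 hij
    rwa [hcover, Set.mem_union, neg_mem_iff] at h
  have trans (i j k : Fin n) (hik : i ≠ k) (hij : ε i - ε j ∈ Q) (hjk : ε j - ε k ∈ Q) :
      ε i - ε k ∈ Q := by
    have h := hclosed _ hij _ hjk
    rw [sub_add_sub_cancel] at h
    exact h (sub_mem_Δroot_iff.2 hik)
  have no_chain (i j k : Fin n) (hij : ε i - ε j ∈ Q) (hji : ε j - ε i ∉ Q)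
      (hjk : ε j - ε k ∈ Q) (hkj : ε k - ε j ∉ Q) : False := by
    have h := hnil _ ⟨hij, by rwa [neg_mem_iff]⟩ _ ⟨hjk, by rwa [neg_mem_iff]⟩
    rw [sub_add_sub_cancel, sub_mem_Δroot_iff, not_not] at h
    subst h
    exact hji hjk
  have not_total : ∃ i j, i ≠ j ∧ ε i - ε j ∉ Q := by
    obtain ⟨_, ⟨i, j, hij, rfl⟩, hv⟩ := Set.exists_of_ssubset hsub
    exact ⟨i, j, hij, hv⟩
  obtain ⟨A, h₀, h₁, hA⟩ :=
    exists_finset_rel_iff_mem_imp_mem (fun i j => ε i - ε j ∈ Q) total trans no_chain not_total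
  refine ⟨A, h₀, by simpa using h₁, Set.ext fun v => ⟨fun hv => ?_, ?_⟩⟩
  · obtain ⟨i, j, hij, rfl⟩ := hsub.subset hv
    exact (sub_mem_blockParabolic_iff hij).2 ((hA i j hij).1 hv)
  · rintro ⟨i, j, hij, h, rfl⟩
    exact (hA i j hij).2 h

lemma mem_iff_forall_sub_mem_blockParabolic (hA : A.Nonempty) (i : Fin n) :
    i ∈ A ↔ ∀ j ≠ i, ε i - ε j ∈ blockParabolic A := by
  refine ⟨fun hi j hji => (sub_mem_blockParabolic_iff hji.symm).2 fun _ => hi, fun h => ?_⟩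
  obtain ⟨j, hj⟩ := hA
  obtain rfl | hji := eq_or_ne j i
  · exact hj
  · exact (sub_mem_blockParabolic_iff hji.symm).1 (h j hji) hj

lemma blockParabolic_injOn : Set.InjOn (blockParabolic (n := n)) {A | A.Nonempty} :=
  fun A hA B hB h => Finset.ext fun i => by
    rw [mem_iff_forall_sub_mem_blockParabolic hA, mem_iff_forall_sub_mem_blockParabolic hB, h]

lemma P_eq_blockParabolic (m : ℕ) : P n m = blockParabolic {i | (i : ℕ) < m} := by
  ext v
  simp only [P, blockParabolic, Finset.mem_filter_univ, Set.mem_union, Set.mem_ofPred_eq]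
  constructor
  · rintro (⟨i, j, hij, h, rfl⟩ | ⟨i, j, hi, hj, rfl⟩)
    · exact ⟨i, j, hij, by omega, rfl⟩
    · exact ⟨i, j, by rintro rfl; omega, by omega, rfl⟩
  · rintro ⟨i, j, hij, h, rfl⟩
    by_cases hi : (i : ℕ) < m
    · by_cases hj : (j : ℕ) < m
      · exact Or.inl ⟨i, j, hij, by omega, rfl⟩
      · exact Or.inr ⟨i, j, hi, by omega, rfl⟩
    · exact Or.inl ⟨i, j, hij, by omega, rfl⟩

lemma card_filter_val_lt_of_le {m : ℕ} (hm : m ≤ n) :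
    ({i | (i : ℕ) < m} : Finset (Fin n)).card = m := by
  rw [Fin.card_filter_val_lt, min_eq_right hm]

lemma act_ε (σ : Equiv.Perm (Fin n)) (i : Fin n) : act σ (ε i) = ε (σ i) := by
  simp [act, ε, Pi.single_comp_equiv]

lemma act_injective (σ : Equiv.Perm (Fin n)) : Function.Injective (act σ) :=
  σ.symm.surjective.injective_comp_right

lemma act_image_blockParabolic (σ : Equiv.Perm (Fin n)) (A : Finset (Fin n)) :
    act σ '' blockParabolic A = blockParabolic (A.map σ.toEmbedding) := by
  have act_sub (i j : Fin n) : act σ (ε i - ε j) = ε (σ i) - ε (σ j) := by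
    rw [← act_ε, ← act_ε]; rfl
  ext v
  simp only [Set.mem_image, blockParabolic, Set.mem_ofPred_eq, Finset.mem_map_equiv]
  constructor
  · rintro ⟨_, ⟨i, j, hij, h, rfl⟩, rfl⟩
    exact ⟨σ i, σ j, σ.injective.ne hij, by simpa using h, act_sub i j⟩
  · rintro ⟨i, j, hij, h, rfl⟩
    exact ⟨_, ⟨σ.symm i, σ.symm j, σ.symm.injective.ne hij, h, rfl⟩, by simp [act_sub]⟩

lemma card_eq_of_act_image_eq_P {σ : Equiv.Perm (Fin n)} {m : ℕ} (hA : 0 < A.card)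
    (hm : 0 < m) (hmn : m ≤ n) (h : act σ '' blockParabolic A = P n m) : A.card = m := by
  rw [act_image_blockParabolic, P_eq_blockParabolic] at h
  have hB : ({i | (i : ℕ) < m} : Finset (Fin n)).Nonempty := by
    rw [← Finset.card_pos, card_filter_val_lt_of_le hmn]; exact hm
  rw [← Finset.card_map σ.toEmbedding, blockParabolic_injOn (by simpa using hA) hB h,
    card_filter_val_lt_of_le hmn]

lemma eq_blockParabolic_of_act_image_eq {σ : Equiv.Perm (Fin n)} {Q : Set (Fin n → ℝ)}
    (h : act σ '' Q = blockParabolic A) : Q = blockParabolic (A.map σ.symm.toEmbedding) := by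
  apply (act_injective σ).image_injective
  rw [h, act_image_blockParabolic, Finset.map_map]
  simp

lemma isCominuscule_P {m : ℕ} (h₀ : 0 < m) (h₁ : m < n) : IsCominuscule (Δroot n) (P n m) := by
  rw [P_eq_blockParabolic]
  apply isCominuscule_blockParabolic <;> rwa [card_filter_val_lt_of_le h₁.le]

theorem exists_act_image_eq_P {Q : Set (Fin n → ℝ)} (hQ : IsCominuscule (Δroot n) Q) :
    ∃ (σ : Equiv.Perm (Fin n)) (m : ℕ), 0 < m ∧ m < n ∧ act σ '' Q = P n m := by
  obtain ⟨A, h₀, h₁, rfl⟩ := exists_eq_blockParabolic hQ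
  obtain ⟨σ, hσ⟩ := Equiv.Perm.exists_map_finset_eq A {i | (i : ℕ) < A.card}
    (card_filter_val_lt_of_le h₁.le).symm
  exact ⟨σ, A.card, h₀, h₁, by rw [act_image_blockParabolic, hσ, P_eq_blockParabolic]⟩

theorem isCominuscule_of_act_image_eq_P {Q : Set (Fin n → ℝ)} {σ : Equiv.Perm (Fin n)} {m : ℕ}
    (h₀ : 0 < m) (h₁ : m < n) (h : act σ '' Q = P n m) : IsCominuscule (Δroot n) Q := by
  rw [P_eq_blockParabolic] at h
  rw [eq_blockParabolic_of_act_image_eq h]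
  apply isCominuscule_blockParabolic <;> rwa [Finset.card_map, card_filter_val_lt_of_le h₁.le]

end PSQ

theorem stmt_12 (n : ℕ) (P : Set (Fin n → ℝ)) :
    (IsCominuscule (PSQ.Δroot n) P ↔
      ∃ (σ : Equiv.Perm (Fin n)) (n₀ : ℕ), 1 ≤ n₀ ∧ n₀ ≤ n - 1 ∧
        PSQ.act σ '' P = PSQ.P n n₀) ∧
    (∀ n₀ : ℕ, 1 ≤ n₀ → n₀ ≤ n - 1 → IsCominuscule (PSQ.Δroot n) (PSQ.P n n₀)) ∧
    (IsCominuscule (PSQ.Δroot n) P →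
      ∀ (n₀ n₀' : ℕ) (σ σ' : Equiv.Perm (Fin n)),
        1 ≤ n₀ → n₀ ≤ n - 1 → 1 ≤ n₀' → n₀' ≤ n - 1 →
        PSQ.act σ '' P = PSQ.P n n₀ → PSQ.act σ' '' P = PSQ.P n n₀' → n₀ = n₀') := by
  refine ⟨⟨fun hP => ?_, ?_⟩, fun m h₀ h₁ => PSQ.isCominuscule_P (by omega) (by omega), ?_⟩
  · obtain ⟨σ, m, h₀, h₁, hσ⟩ := PSQ.exists_act_image_eq_P hP
    exact ⟨σ, m, h₀, by omega, hσ⟩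
  · rintro ⟨σ, m, h₀, h₁, hσ⟩
    exact PSQ.isCominuscule_of_act_image_eq_P (by omega) (by omega) hσ
  · intro hP m m' σ σ' h₀ h₁ h₀' h₁' hσ hσ'
    obtain ⟨A, hA, -, rfl⟩ := PSQ.exists_eq_blockParabolic hP
    rw [← PSQ.card_eq_of_act_image_eq_P hA (by omega) (by omega) hσ,
      PSQ.card_eq_of_act_image_eq_P hA (by omega) (by omega) hσ']
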